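/- Let $T$ be a positive operator on a Banach lattice $X$ that is not semi non-supporting, i.e., there exist nonzero positive $x \in X$ and nonzero positive $x' \in X'$ such that $x'(T^p x) = 0$ for all $p \geq 0$. Then the closed ideal generated by the element $z = \sum_{n : T^n x \neq 0} \frac{T^n x}{2^n \|T^n x\|}$ is a nontrivial closed $T$-invariant ideal. -/

import Mathlib

/-!
With `z = ∑ Tⁿx / (2ⁿ‖Tⁿx‖)`, the series converges absolutely and comparing it with its own
shift gives `T z ≤ 2‖T‖ z`, so the principal ideal of `z` and hence its closure are
`T`-invariant. The closure is nonzero since `x ≤ ‖x‖ z`, and it is proper because the positive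
functional `x'` kills `z`, hence every `y` with `|y| ≤ c z`, hence (by continuity) the whole
closed ideal, while `x' ≠ 0`.
-/

open Filter Topology LatticeOrderedAddCommGroup

theorem inv_two_pow_smul_nonneg {X : Type*} [AddCommGroup X] [Lattice X] [IsOrderedAddMonoid X]
    [Module ℝ X] {v : X} (hv : 0 ≤ v) (m : ℕ) : 0 ≤ ((2 : ℝ) ^ m)⁻¹ • v := by
  induction m with
  | zero => simpa using hv
  | succ m ih =>
    refine nsmul_two_semiclosed ?_
    convert ih using 1
    rw [two_nsmul, ← add_smul, pow_succ]
    congr 1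
    field_simp
    ring

section OrderedModule

variable {X : Type*} [NormedAddCommGroup X] [Lattice X] [HasSolidNorm X] [IsOrderedAddMonoid X]
  [NormedSpace ℝ X]

-- The positive cone is closed, so nonnegativity passes from dyadic to arbitrary scalars.
theorem real_smul_nonneg {c : ℝ} (hc : 0 ≤ c) {v : X} (hv : 0 ≤ v) : 0 ≤ c • v := by
  have hdyadic : Tendsto (fun m : ℕ ↦ (⌊c * 2 ^ m⌋₊ : ℝ) / 2 ^ m) atTop (𝓝 c) :=
    (tendsto_nat_floor_mul_div_atTop hc).comp (tendsto_pow_atTop_atTop_of_one_lt one_lt_two)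
  refine ge_of_tendsto' (hdyadic.smul_const v) fun m ↦ ?_
  rw [div_eq_mul_inv, mul_smul, Nat.cast_smul_eq_nsmul]
  exact nsmul_nonneg (inv_two_pow_smul_nonneg hv m) _

instance : IsOrderedModule ℝ X := .of_smul_nonneg fun _ hc _ hv ↦ real_smul_nonneg hc hv

end OrderedModule

section VectorLattice

variable {R X : Type*} [Ring R] [LinearOrder R] [IsOrderedRing R] [AddCommGroup X] [Lattice X]
  [Module R X] [PosSMulMono R X]

theorem smul_le_abs_smul_abs (c : R) (a : X) : c • a ≤ |c| • |a| := by
  rcases le_total 0 c with hc | hc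
  · rw [abs_of_nonneg hc]
    exact smul_le_smul_of_nonneg_left (le_abs_self a) hc
  · rw [abs_of_nonpos hc, ← neg_smul_neg]
    exact smul_le_smul_of_nonneg_left (neg_le_abs a) (neg_nonneg.2 hc)

theorem abs_smul_le [IsOrderedAddMonoid X] (c : R) (a : X) : |c • a| ≤ |c| • |a| :=
  abs_le'.2 ⟨smul_le_abs_smul_abs c a, by simpa using smul_le_abs_smul_abs c (-a)⟩

end VectorLattice

theorem abs_map_le_map_abs {X Y F : Type*} [AddCommGroup X] [Lattice X] [IsOrderedAddMonoid X]
    [AddCommGroup Y] [Lattice Y] [IsOrderedAddMonoid Y] [FunLike F X Y]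
    [AddMonoidHomClass F X Y] {f : F} (hf : ∀ a, 0 ≤ a → 0 ≤ f a) (a : X) : |f a| ≤ f |a| := by
  have hmono := (monotone_iff_map_nonneg f).2 hf
  exact abs_le'.2 ⟨hmono (le_abs_self a), by simpa using hmono (neg_le_abs a)⟩

theorem IsSolid.closure {X : Type*} [AddCommGroup X] [Lattice X] [IsOrderedAddMonoid X]
    [TopologicalSpace X] [TopologicalLattice X] [ContinuousNeg X] {s : Set X} (hs : IsSolid s) :
    IsSolid (closure s) := by
  intro y hy w hw
  -- `w` is the image of `y` under the clamp `u ↦ (w ⊓ |u|) ⊔ -|u|`, which maps `s` into `s`.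
  set clamp : X → X := fun u ↦ (w ⊓ |u|) ⊔ -|u|
  have habs : Continuous fun u : X ↦ |u| := continuous_id.sup continuous_neg
  have hclamp : Continuous clamp := (continuous_const.inf habs).sup habs.neg
  have hmaps : Set.MapsTo clamp s s := fun u hu ↦ hs hu <| abs_le'.2
    ⟨sup_le inf_le_right ((neg_nonpos.2 (abs_nonneg u)).trans (abs_nonneg u)),
      by rw [neg_sup, neg_neg]; exact inf_le_right⟩
  have hclampy : clamp y = w := by
    simp only [clamp, inf_eq_left.2 ((le_abs_self w).trans hw),
      sup_eq_left.2 ((neg_le_neg hw).trans (neg_le.1 (neg_le_abs w)))]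
  exact hclampy ▸ map_mem_closure hclamp hy hmaps

section PrincipalIdeal

variable {X : Type*} [AddCommGroup X] [Lattice X] [IsOrderedAddMonoid X] [Module ℝ X]
  [PosSMulMono ℝ X]

def principalIdeal (z : X) : Submodule ℝ X where
  carrier := {y | ∃ c : ℝ, |y| ≤ c • |z|}
  add_mem' := by
    rintro a b ⟨c, hc⟩ ⟨d, hd⟩
    exact ⟨c + d, (abs_add_le a b).trans (add_smul c d |z| ▸ add_le_add hc hd)⟩
  zero_mem' := ⟨0, by simp⟩
  smul_mem' := by
    rintro c a ⟨d, hd⟩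
    exact ⟨|c| * d, (abs_smul_le c a).trans
      (mul_smul |c| d |z| ▸ smul_le_smul_of_nonneg_left hd (abs_nonneg c))⟩

theorem exists_nonneg_of_mem_principalIdeal {y z : X} (hy : y ∈ principalIdeal z) :
    ∃ c : ℝ, 0 ≤ c ∧ |y| ≤ c • |z| := by
  obtain ⟨c, hc⟩ := hy
  exact ⟨|c|, abs_nonneg c, hc.trans (smul_le_smul_of_nonneg_right (le_abs_self c) (abs_nonneg z))⟩

theorem self_mem_principalIdeal (z : X) : z ∈ principalIdeal z := ⟨1, (one_smul ℝ |z|).ge⟩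

theorem isSolid_principalIdeal (z : X) : IsSolid (principalIdeal z : Set X) :=
  fun _ ⟨c, hc⟩ _ hw ↦ ⟨c, hw.trans hc⟩

theorem principalIdeal_le_of_mem {y z : X} (hy : y ∈ principalIdeal z) :
    principalIdeal y ≤ principalIdeal z := by
  obtain ⟨d, hd0, hd⟩ := exists_nonneg_of_mem_principalIdeal hy
  intro u hu
  obtain ⟨c, hc0, hc⟩ := exists_nonneg_of_mem_principalIdeal hu
  refine ⟨c * d, ?_⟩
  calc |u| ≤ c • |y| := hc
    _ ≤ c • (d • |z|) := smul_le_smul_of_nonneg_left hd hc0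
    _ = (c * d) • |z| := (mul_smul c d |z|).symm

theorem mapsTo_principalIdeal_map_abs {Y F : Type*} [AddCommGroup Y] [Lattice Y]
    [IsOrderedAddMonoid Y] [Module ℝ Y] [PosSMulMono ℝ Y] [FunLike F X Y] [LinearMapClass F ℝ X Y]
    {T : F} (hT : ∀ a, 0 ≤ a → 0 ≤ T a) (z : X) :
    Set.MapsTo T (principalIdeal z) (principalIdeal (T |z|)) := by
  intro y hy
  obtain ⟨c, hc0, hc⟩ := exists_nonneg_of_mem_principalIdeal hy
  refine ⟨c, ?_⟩
  calc |T y| ≤ T |y| := abs_map_le_map_abs hT y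
    _ ≤ T (c • |z|) := (monotone_iff_map_nonneg T).2 hT hc
    _ = c • T |z| := map_smul T c |z|
    _ ≤ c • |T (|z|)| := smul_le_smul_of_nonneg_left (le_abs_self _) hc0

end PrincipalIdeal

theorem principalIdeal_topologicalClosure_le_ker {X : Type*} [AddCommGroup X] [Lattice X]
    [IsOrderedAddMonoid X] [Module ℝ X] [PosSMulMono ℝ X] [TopologicalSpace X]
    [IsTopologicalAddGroup X] [ContinuousConstSMul ℝ X] {f : X →L[ℝ] ℝ}
    (hf : ∀ a, 0 ≤ a → 0 ≤ f a) {z : X} (hfz : f |z| = 0) :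
    (principalIdeal z).topologicalClosure ≤ f.ker := by
  refine Submodule.topologicalClosure_minimal _ (fun y hy ↦ ?_) f.isClosed_ker
  obtain ⟨c, hc0, hc⟩ := exists_nonneg_of_mem_principalIdeal hy
  refine abs_nonpos_iff.1 ?_
  calc |f y| ≤ f |y| := abs_map_le_map_abs hf y
    _ ≤ f (c • |z|) := (monotone_iff_map_nonneg f).2 hf hc
    _ = 0 := by rw [map_smul, hfz, smul_zero]

theorem pow_apply_nonneg {X : Type*} [NormedAddCommGroup X] [NormedSpace ℝ X] [Preorder X]
    {T : X →L[ℝ] X} (hT : ∀ a, 0 ≤ a → 0 ≤ T a) {x : X} (hx : 0 ≤ x) (n : ℕ) : 0 ≤ (T ^ n) x := by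
  induction n with
  | zero => simpa using hx
  | succ n ih =>
    rw [pow_succ', mul_apply_eq_comp]
    exact hT _ ih

section OrbitSeries

variable {X : Type*} [NormedAddCommGroup X] [NormedSpace ℝ X] (T : X →L[ℝ] X) (x : X)

-- A term with `Tⁿx = 0` is `0`, because `0⁻¹ = 0`.
noncomputable def orbitTerm (n : ℕ) : X := ((2 : ℝ) ^ n * ‖(T ^ n) x‖)⁻¹ • (T ^ n) x

theorem norm_orbitTerm_le (n : ℕ) : ‖orbitTerm T x n‖ ≤ (2⁻¹ : ℝ) ^ n := by
  rcases eq_or_ne ((T ^ n) x) 0 with h | h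
  · simp [orbitTerm, h]
  · refine le_of_eq ?_
    rw [orbitTerm, norm_smul, Real.norm_of_nonneg (by positivity), mul_inv, mul_assoc,
      inv_mul_cancel₀ (norm_ne_zero_iff.2 h), mul_one, inv_pow]

theorem summable_orbitTerm [CompleteSpace X] : Summable (orbitTerm T x) :=
  .of_norm_bounded (summable_geometric_of_lt_one (by norm_num) (by norm_num))
    (norm_orbitTerm_le T x)

theorem apply_tsum_orbitTerm_eq_zero [CompleteSpace X] {f : X →L[ℝ] ℝ}
    (hf : ∀ n, f ((T ^ n) x) = 0) : f (∑' n, orbitTerm T x n) = 0 := by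
  rw [f.map_tsum (summable_orbitTerm T x)]
  simp only [orbitTerm, map_smul, hf, smul_zero, tsum_zero]

section Positive

variable [Lattice X] [HasSolidNorm X] [IsOrderedAddMonoid X] {T x}

theorem orbitTerm_nonneg (hT : ∀ a, 0 ≤ a → 0 ≤ T a) (hx : 0 ≤ x) (n : ℕ) : 0 ≤ orbitTerm T x n :=
  smul_nonneg (by positivity) (pow_apply_nonneg hT hx n)

theorem map_orbitTerm_le (hT : ∀ a, 0 ≤ a → 0 ≤ T a) (hx : 0 ≤ x) (n : ℕ) :
    T (orbitTerm T x n) ≤ (2 * ‖T‖) • orbitTerm T x (n + 1) := by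
  set v := (T ^ n) x
  have hsucc : (T ^ (n + 1)) x = T v := by rw [pow_succ', mul_apply_eq_comp]
  rw [orbitTerm, orbitTerm, map_smul, hsucc, smul_smul]
  rcases eq_or_ne (T v) 0 with h | h
  · rw [h, smul_zero, smul_zero]
  refine smul_le_smul_of_nonneg_right ?_ (hsucc ▸ pow_apply_nonneg hT hx (n + 1))
  have hv : v ≠ 0 := fun hv ↦ h (by rw [hv, map_zero])
  have hv_pos : 0 < ‖v‖ := norm_pos_iff.2 hv
  rw [pow_succ]
  field_simp
  exact div_le_of_le_mul₀ (norm_nonneg _) (norm_nonneg _) (T.le_opNorm v)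

variable [CompleteSpace X]

theorem map_tsum_orbitTerm_le (hT : ∀ a, 0 ≤ a → 0 ≤ T a) (hx : 0 ≤ x) :
    T (∑' n, orbitTerm T x n) ≤ (2 * ‖T‖) • ∑' n, orbitTerm T x n := by
  have hsum := summable_orbitTerm T x
  rw [T.map_tsum hsum, ← hsum.tsum_const_smul]
  exact Summable.tsum_le_tsum_of_inj Nat.succ Nat.succ_injective
    (fun _ _ ↦ smul_nonneg (by positivity) (orbitTerm_nonneg hT hx _)) (map_orbitTerm_le hT hx)
    (hsum.mapL T) (hsum.const_smul _)

theorem tsum_orbitTerm_ne_zero (hT : ∀ a, 0 ≤ a → 0 ≤ T a) (hx : 0 ≤ x) (hx0 : x ≠ 0) :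
    ∑' n, orbitTerm T x n ≠ 0 := by
  intro hzero
  have hle : orbitTerm T x 0 ≤ 0 :=
    hzero ▸ (summable_orbitTerm T x).le_tsum 0 fun n _ ↦ orbitTerm_nonneg hT hx n
  have heq : ‖x‖⁻¹ • x = 0 := by
    simpa [orbitTerm] using le_antisymm hle (orbitTerm_nonneg hT hx 0)
  exact hx0 ((smul_eq_zero_iff_right (inv_ne_zero (norm_ne_zero_iff.2 hx0))).1 heq)

end Positive

end OrbitSeries

open Classical in
theorem stmt1 {X : Type*} [NormedAddCommGroup X] [Lattice X] [HasSolidNorm X]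
    [IsOrderedAddMonoid X] [NormedSpace ℝ X]
    [CompleteSpace X]
    (T : X →L[ℝ] X) (hT : ∀ x : X, 0 ≤ x → 0 ≤ T x)
    (x : X) (hx : 0 ≤ x) (hx0 : x ≠ 0)
    (x' : X →L[ℝ] ℝ) (hx' : ∀ y : X, 0 ≤ y → 0 ≤ x' y) (hx'0 : x' ≠ 0)
    (hzero : ∀ p : ℕ, x' ((T ^ p) x) = 0)
    (z : X)
    (hz : z = ∑' n : ℕ, if (T ^ n) x = 0 then (0 : X)
        else ((2 : ℝ) ^ n * ‖(T ^ n) x‖)⁻¹ • (T ^ n) x)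
    (I : Set X) (hI : I = closure {y : X | ∃ c : ℝ, |y| ≤ c • |z|}) :
    I ≠ {0} ∧ I ≠ Set.univ ∧ IsClosed I ∧
      (∀ y ∈ I, ∀ w : X, |w| ≤ |y| → w ∈ I) ∧
      (∀ a ∈ I, ∀ b ∈ I, a + b ∈ I) ∧
      (∀ (c : ℝ), ∀ a ∈ I, c • a ∈ I) ∧
      (∀ a ∈ I, T a ∈ I) := by
  have hz' : z = ∑' n, orbitTerm T x n := by
    rw [hz]
    congr with n
    split_ifs with h <;> simp [orbitTerm, h]
  have hz0 : 0 ≤ z := hz' ▸ tsum_nonneg (orbitTerm_nonneg hT hx)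
  have hTz : T |z| ∈ principalIdeal z := by
    refine ⟨2 * ‖T‖, ?_⟩
    rw [abs_of_nonneg hz0, abs_of_nonneg (hT z hz0), hz']
    exact map_tsum_orbitTerm_le hT hx
  have hker := principalIdeal_topologicalClosure_le_ker hx' (z := z)
    (by rw [abs_of_nonneg hz0, hz', apply_tsum_orbitTerm_eq_zero T x hzero])
  obtain rfl : I = (principalIdeal z).topologicalClosure := hI
  refine ⟨?_, ?_, ?_, ?_, ?_, ?_, ?_⟩
  · intro h
    have hz_zero : z ∈ ({0} : Set X) := h ▸ subset_closure (self_mem_principalIdeal z)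
    exact tsum_orbitTerm_ne_zero hT hx hx0 (hz' ▸ hz_zero)
  · exact fun h ↦ hx'0 (ContinuousLinearMap.ext fun u ↦ hker (Set.eq_univ_iff_forall.1 h u))
  · exact isClosed_closure
  · exact IsSolid.closure (isSolid_principalIdeal z)
  · exact fun a ha b hb ↦ Submodule.add_mem _ ha hb
  · exact fun c a ha ↦ Submodule.smul_mem _ c ha
  · exact fun a ha ↦ map_mem_closure T.continuous ha
      ((mapsTo_principalIdeal_map_abs hT z).mono_right (principalIdeal_le_of_mem hTz))
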